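/- Let f : [0,∞) → ℝ satisfy |f(s) - f(t)| ≤ M|s - t|^ν for all s,t ≥ 0, with M > 0 and 0 < ν ≤ 1. Then for the Dunkl q-Szász-Mirakjan operator, for all x ≥ 0: |D*_{n,q}(f;x) - f(x)| ≤ M·(λ_n(x))^{ν/2}, where λ_n(x) = D*_{n,q}((e_1 - x)^2; x). -/
import Mathlib


open Real Filter Topology

noncomputable def theta (k : ℕ) : ℝ := if Even k then 0 else 1

noncomputable def gam (μ q : ℝ) : ℕ → ℝ
  | 0 => 1
  | n + 1 => ((1 - q ^ (2 * μ * theta (n + 1) + (n + 1 : ℝ))) / (1 - q)) * gam μ q n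

/-- q-number of a real `a`: `[a]_q = (1-q^a)/(1-q)` (real exponentiation). -/
noncomputable def qnum (q a : ℝ) : ℝ := (1 - q ^ a) / (1 - q)

/-- q-Dunkl exponential `E_{μ,q}`. -/
noncomputable def Eexp (μ q x : ℝ) : ℝ := ∑' k : ℕ, q ^ (k * (k - 1) / 2) * x ^ k / gam μ q k

/-- nodes of the Dunkl q-Szász-Mirakjan operator. -/
noncomputable def node (μ q : ℝ) (n k : ℕ) : ℝ :=
  (1 - q ^ (2 * μ * theta k + (k : ℝ))) / (q ^ ((k : ℝ) - 2) * (1 - q ^ n))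

/-- Dunkl q-Szász-Mirakjan operator `D*_{n,q}`. -/
noncomputable def Dop (μ q : ℝ) (n : ℕ) (f : ℝ → ℝ) (x : ℝ) : ℝ :=
  (1 / Eexp μ q (qnum q n * x)) *
    ∑' k : ℕ, (qnum q n * x) ^ k / gam μ q k * q ^ (k * (k - 1) / 2) * f (node μ q n k)

lemma tangent_rpow {t m s : ℝ} (ht : 0 ≤ t) (hm : 0 < m) (hs0 : 0 < s) (hs1 : s ≤ 1) :
    t ^ s ≤ m ^ s + s * m ^ (s - 1) * (t - m) := by
  have hd : (0:ℝ) ≤ t / m := div_nonneg ht hm.le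
  have h1 : (1 + (t / m - 1)) ^ s ≤ 1 + s * (t / m - 1) :=
    rpow_one_add_le_one_add_mul_self (by linarith) hs0.le hs1
  have h2 : (t / m) ^ s = t ^ s / m ^ s := Real.div_rpow ht hm.le s
  have hms : (0:ℝ) < m ^ s := Real.rpow_pos_of_pos hm s
  have h3 : t ^ s / m ^ s ≤ 1 + s * (t / m - 1) := by
    rw [← h2]; simpa using h1
  have h4 : t ^ s ≤ m ^ s * (1 + s * (t / m - 1)) := by
    rw [div_le_iff₀ hms] at h3; linarith [h3]
  have h5 : m ^ (s - 1) = m ^ s / m := by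
    rw [Real.rpow_sub hm, Real.rpow_one]
  rw [h5]
  calc t ^ s ≤ m ^ s * (1 + s * (t / m - 1)) := h4
    _ = m ^ s + s * (m ^ s / m) * (t - m) := by field_simp

lemma jensen_tsum_rpow {w g : ℕ → ℝ} {s : ℝ} (hs0 : 0 < s) (hs1 : s ≤ 1)
    (hw : ∀ k, 0 ≤ w k) (hg : ∀ k, 0 ≤ g k)
    (hws : Summable w) (hw1 : ∑' k, w k = 1)
    (hwg : Summable (fun k => w k * g k))
    (hwgs : Summable (fun k => w k * g k ^ s)) :
    ∑' k, w k * g k ^ s ≤ (∑' k, w k * g k) ^ s := by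
  have hnn : ∀ k, 0 ≤ w k * g k := fun k => mul_nonneg (hw k) (hg k)
  set m := ∑' k, w k * g k with hmdef
  have hm0 : 0 ≤ m := tsum_nonneg hnn
  rcases eq_or_lt_of_le hm0 with hm | hm
  · have hzero : ∀ k, w k * g k = 0 := fun k =>
      le_antisymm (hm ▸ Summable.le_tsum hwg k fun j _ => hnn j) (hnn k)
    have hz2 : ∀ k, w k * g k ^ s = 0 := by
      intro k
      rcases mul_eq_zero.mp (hzero k) with h | h
      · simp [h]
      · rw [h, Real.zero_rpow hs0.ne', mul_zero]
    rw [← hm, Real.zero_rpow hs0.ne']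
    rw [tsum_congr hz2]
    simp
  · set c1 : ℝ := m ^ s - s * m ^ (s - 1) * m with hc1
    set c2 : ℝ := s * m ^ (s - 1) with hc2
    have hpt : ∀ k, w k * g k ^ s ≤ w k * c1 + (w k * g k) * c2 := by
      intro k
      have h := tangent_rpow (hg k) hm hs0 hs1
      calc w k * g k ^ s ≤ w k * (m ^ s + s * m ^ (s-1) * (g k - m)) :=
            mul_le_mul_of_nonneg_left h (hw k)
        _ = w k * c1 + (w k * g k) * c2 := by rw [hc1, hc2]; ring
    have hsum2 : Summable (fun k => w k * c1 + (w k * g k) * c2) :=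
      (hws.mul_right c1).add (hwg.mul_right c2)
    calc ∑' k, w k * g k ^ s ≤ ∑' k, (w k * c1 + (w k * g k) * c2) :=
          Summable.tsum_le_tsum hpt hwgs hsum2
      _ = (∑' k, w k) * c1 + (∑' k, w k * g k) * c2 := by
          rw [Summable.tsum_add (hws.mul_right c1) (hwg.mul_right c2), tsum_mul_right, tsum_mul_right]
      _ = m ^ s := by rw [hw1, ← hmdef, hc1, hc2]; ring

lemma theta_nonneg (k : ℕ) : 0 ≤ theta k := by unfold theta; split <;> norm_num

lemma gam_pos {μ q : ℝ} (hq0 : 0 < q) (hq1 : q < 1) (hμ : 0 < μ) (k : ℕ) :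
    0 < gam μ q k := by
  induction k with
  | zero => simp [gam]
  | succ k ih =>
    rw [gam]
    refine mul_pos (div_pos ?_ (by linarith)) ih
    have he : (0:ℝ) < 2 * μ * theta (k+1) + (k+1 : ℝ) := by
      have := theta_nonneg (k+1); push_cast; nlinarith
    have := Real.rpow_lt_one hq0.le hq1 he
    linarith

lemma gam_ge_one {μ q : ℝ} (hq0 : 0 < q) (hq1 : q < 1) (hμ : 0 < μ) (k : ℕ) :
    1 ≤ gam μ q k := by
  induction k with
  | zero => simp [gam]
  | succ k ih =>
    rw [gam]
    have he : (1:ℝ) ≤ 2 * μ * theta (k+1) + (k+1 : ℝ) := by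
      have := theta_nonneg (k+1); push_cast; nlinarith
    have h2 : q ^ (2 * μ * theta (k+1) + (k+1 : ℝ)) ≤ q := by
      nth_rewrite 2 [← Real.rpow_one q]
      exact Real.rpow_le_rpow_of_exponent_ge hq0 hq1.le he
    have hfac : 1 ≤ (1 - q ^ (2 * μ * theta (k+1) + (k+1 : ℝ))) / (1 - q) := by
      rw [le_div_iff₀ (by linarith : (0:ℝ) < 1 - q)]; linarith
    nlinarith

lemma aux_eq (P k : ℕ) (q a C : ℝ) (hq : q ≠ 0) :
    (q ^ P * a ^ k) * (C * (1/q) ^ k) ^ 2 = C ^ 2 * (q ^ P * (a / q ^ 2) ^ k) := by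
  have hqk : q ^ k ≠ 0 := pow_ne_zero _ hq
  field_simp
  ring

lemma master_summable {q : ℝ} (hq0 : 0 < q) (hq1 : q < 1) {r : ℝ} (hr : 0 ≤ r) :
    Summable (fun k : ℕ => q ^ (k * (k - 1) / 2) * r ^ k) := by
  apply summable_of_ratio_norm_eventually_le (r := 1/2) (by norm_num)
  have htend : Tendsto (fun k : ℕ => q ^ k * r) atTop (𝓝 0) := by
    simpa using (tendsto_pow_atTop_nhds_zero_of_lt_one hq0.le hq1).mul_const r
  filter_upwards [htend.eventually_le_const (by norm_num : (0:ℝ) < 1/2)] with k hk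
  have h1 : q ^ ((k+1) * (k+1-1) / 2) * r ^ (k+1)
      = (q ^ k * r) * (q ^ (k * (k-1)/2) * r ^ k) := by
    rw [Nat.triangle_succ, pow_add, pow_succ]; ring
  rw [h1, norm_mul]
  refine mul_le_mul_of_nonneg_right ?_ (norm_nonneg _)
  rw [Real.norm_eq_abs, abs_of_nonneg (by positivity)]; exact hk


set_option maxHeartbeats 2000000 in
theorem Dop_lipschitz_rate (q μ : ℝ) (hq0 : 0 < q) (hq1 : q < 1) (hμ : 0 < μ)
    (n : ℕ) (hn : 1 ≤ n) (x : ℝ) (hx : 0 ≤ x)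
    (f : ℝ → ℝ) (M ν : ℝ) (hM : 0 < M) (hν0 : 0 < ν) (hν1 : ν ≤ 1)
    (hf : ∀ s t : ℝ, 0 ≤ s → 0 ≤ t → |f s - f t| ≤ M * |s - t| ^ ν) :
    |Dop μ q n f x - f x| ≤ M * (Dop μ q n (fun t => (t - x) ^ 2) x) ^ (ν / 2) := by
  have hq1' : (0:ℝ) < 1 - q := by linarith
  set a := qnum q (n : ℝ) * x with hadef
  have hqn : q ^ ((n:ℝ)) ≤ 1 := Real.rpow_le_one hq0.le hq1.le (by positivity)
  have ha : 0 ≤ a := by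
    rw [hadef, qnum]
    exact mul_nonneg (div_nonneg (by linarith) hq1'.le) hx
  -- the weights
  set p : ℕ → ℝ := fun k => a ^ k / gam μ q k * q ^ (k * (k - 1) / 2) with hpdef
  have hgam := gam_pos hq0 hq1 hμ
  have hgam1 := gam_ge_one hq0 hq1 hμ
  have hp : ∀ k, 0 ≤ p k := fun k =>
    mul_nonneg (div_nonneg (pow_nonneg ha k) (hgam k).le) (by positivity)
  have hple : ∀ k, p k ≤ q ^ (k * (k - 1) / 2) * a ^ k := by
    intro k
    rw [hpdef]
    have := div_le_self (pow_nonneg ha k) (hgam1 k)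
    calc a ^ k / gam μ q k * q ^ (k * (k-1)/2)
        ≤ a ^ k * q ^ (k*(k-1)/2) := by
          exact mul_le_mul_of_nonneg_right this (by positivity)
      _ = q ^ (k*(k-1)/2) * a ^ k := by ring
  have hSp : Summable p :=
    Summable.of_nonneg_of_le hp hple (master_summable hq0 hq1 ha)
  -- node facts
  have hqn' : (0:ℝ) < 1 - q ^ n := by
    have : q ^ n < 1 := pow_lt_one₀ hq0.le hq1 (by omega)
    linarith
  have hnode0 : ∀ k, 0 ≤ node μ q n k := by
    intro k
    have he : (0:ℝ) ≤ 2 * μ * theta k + (k : ℝ) := by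
      have := theta_nonneg k; positivity
    have h1 : q ^ (2 * μ * theta k + (k : ℝ)) ≤ 1 := Real.rpow_le_one hq0.le hq1.le he
    have h2 : (0:ℝ) < q ^ ((k:ℝ) - 2) := Real.rpow_pos_of_pos hq0 _
    exact div_nonneg (by linarith) (by positivity)
  set C : ℝ := q ^ 2 / (1 - q ^ n) with hCdef
  have hC : 0 ≤ C := by positivity
  have hnode_le : ∀ k, node μ q n k ≤ C * (1/q) ^ k := by
    intro k
    have h2 : (0:ℝ) < q ^ ((k:ℝ) - 2) := Real.rpow_pos_of_pos hq0 _
    have hnum : 1 - q ^ (2 * μ * theta k + (k : ℝ)) ≤ 1 := by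
      have : (0:ℝ) < q ^ (2 * μ * theta k + (k : ℝ)) := Real.rpow_pos_of_pos hq0 _
      linarith
    have hden : (0:ℝ) < q ^ ((k:ℝ) - 2) * (1 - q ^ n) := by positivity
    have step1 : node μ q n k ≤ 1 / (q ^ ((k:ℝ) - 2) * (1 - q ^ n)) := by
      rw [node]; gcongr
    have hq2 : q ^ ((k:ℝ) - 2) = q ^ k / q ^ 2 := by
      rw [Real.rpow_sub hq0, Real.rpow_natCast,
        show (2:ℝ) = ((2:ℕ):ℝ) by norm_num, Real.rpow_natCast]
    have step2 : 1 / (q ^ ((k:ℝ) - 2) * (1 - q ^ n)) = C * (1/q) ^ k := by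
      rw [hq2, hCdef, one_div_pow]
      have hqk : q ^ k ≠ 0 := by positivity
      field_simp
    rw [← step2]; exact step1
  -- summability of p * node^2
  have hS2 : Summable (fun k => p k * (node μ q n k) ^ 2) := by
    apply Summable.of_nonneg_of_le (fun k => mul_nonneg (hp k) (sq_nonneg _))
      (f := fun k => C ^ 2 * (q ^ (k * (k - 1) / 2) * (a / q ^ 2) ^ k))
    · intro k
      have h1 : (node μ q n k) ^ 2 ≤ (C * (1/q) ^ k) ^ 2 :=
        pow_le_pow_left₀ (hnode0 k) (hnode_le k) 2
      calc p k * (node μ q n k) ^ 2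
          ≤ (q ^ (k * (k-1)/2) * a ^ k) * (C * (1/q) ^ k) ^ 2 :=
            mul_le_mul (hple k) h1 (sq_nonneg _) (by positivity)
        _ = C ^ 2 * (q ^ (k * (k-1)/2) * (a / q ^ 2) ^ k) :=
            aux_eq _ _ _ _ _ hq0.ne'
    · exact (master_summable hq0 hq1 (by positivity : (0:ℝ) ≤ a / q ^ 2)).mul_left _
  have hSnx : Summable (fun k => p k * (node μ q n k - x) ^ 2) := by
    apply Summable.of_nonneg_of_le (fun k => mul_nonneg (hp k) (sq_nonneg _))
      (f := fun k => 2 * (p k * (node μ q n k) ^ 2) + (2 * x ^ 2) * p k)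
    · intro k
      have h1 : (node μ q n k - x) ^ 2 ≤ 2 * (node μ q n k) ^ 2 + 2 * x ^ 2 := by
        nlinarith [sq_nonneg (node μ q n k + x)]
      have := mul_le_mul_of_nonneg_left h1 (hp k)
      nlinarith [this]
    · exact (hS2.mul_left 2).add (hSp.mul_left (2 * x ^ 2))
  -- rpow bound y^ν ≤ 1 + y²
  have hyb : ∀ y : ℝ, 0 ≤ y → y ^ ν ≤ 1 + y ^ 2 := by
    intro y hy
    rcases le_or_gt y 1 with h | h
    · have := Real.rpow_le_one hy h hν0.le
      nlinarith [sq_nonneg y]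
    · have h1 : y ^ ν ≤ y ^ (1:ℝ) :=
        Real.rpow_le_rpow_of_exponent_le h.le hν1
      rw [Real.rpow_one] at h1
      nlinarith
  -- summability of p * |node - x|^ν
  have hSd : Summable (fun k => p k * |node μ q n k - x| ^ ν) := by
    apply Summable.of_nonneg_of_le
      (fun k => mul_nonneg (hp k) (Real.rpow_nonneg (abs_nonneg _) ν))
      (f := fun k => p k + p k * (node μ q n k - x) ^ 2)
    · intro k
      have h1 : |node μ q n k - x| ^ ν ≤ 1 + (node μ q n k - x) ^ 2 := by
        have := hyb _ (abs_nonneg (node μ q n k - x))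
        rwa [sq_abs] at this
      have := mul_le_mul_of_nonneg_left h1 (hp k)
      nlinarith [this]
    · exact hSp.add hSnx
  -- summability of p * f(node)
  have hSf : Summable (fun k => p k * f (node μ q n k)) := by
    apply Summable.of_norm
    apply Summable.of_nonneg_of_le (fun k => norm_nonneg _)
      (f := fun k => (|f x| + M) * p k + M * (p k * (node μ q n k - x) ^ 2))
    · intro k
      have h1 : |f (node μ q n k)| ≤ |f x| + M * |node μ q n k - x| ^ ν := by
        have h2 := hf (node μ q n k) x (hnode0 k) hx
        have := abs_sub_abs_le_abs_sub (f (node μ q n k)) (f x)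
        linarith
      have h3 : |node μ q n k - x| ^ ν ≤ 1 + (node μ q n k - x) ^ 2 := by
        have := hyb _ (abs_nonneg (node μ q n k - x))
        rwa [sq_abs] at this
      have h4 : |f (node μ q n k)| ≤ |f x| + M + M * (node μ q n k - x) ^ 2 := by
        nlinarith
      calc ‖p k * f (node μ q n k)‖ = p k * |f (node μ q n k)| := by
            rw [Real.norm_eq_abs, abs_mul, abs_of_nonneg (hp k)]
        _ ≤ p k * (|f x| + M + M * (node μ q n k - x) ^ 2) :=
            mul_le_mul_of_nonneg_left h4 (hp k)
        _ = (|f x| + M) * p k + M * (p k * (node μ q n k - x) ^ 2) := by ring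
    · exact (hSp.mul_left _).add (hSnx.mul_left M)
  -- the total mass E
  set E : ℝ := ∑' k, p k with hEdef
  have hp0 : p 0 = 1 := by simp [hpdef, gam]
  have hE1 : 1 ≤ E := by
    have := Summable.le_tsum hSp 0 (fun j _ => hp j)
    rw [hp0] at this; exact this
  have hEpos : (0:ℝ) < E := by linarith
  have hEeq : Eexp μ q a = E := by
    rw [Eexp, hEdef]
    exact tsum_congr fun k => by rw [hpdef]; ring
  have hDf : Dop μ q n f x = (1/E) * ∑' k, p k * f (node μ q n k) := by
    simp only [Dop]
    rw [← hadef, hEeq]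
  set T : ℝ := ∑' k, p k * (node μ q n k - x) ^ 2 with hTdef
  have hT0 : 0 ≤ T := tsum_nonneg fun k => mul_nonneg (hp k) (sq_nonneg _)
  have hDg : Dop μ q n (fun t => (t - x) ^ 2) x = T / E := by
    simp only [Dop]
    rw [← hadef, hEeq, hTdef, one_div, inv_mul_eq_div]
  -- step 1 : recentering
  have hconst : ∑' k, p k * f x = E * f x := by
    rw [tsum_mul_right, ← hEdef]
  have hsub : ∑' k, p k * (f (node μ q n k) - f x)
      = (∑' k, p k * f (node μ q n k)) - (∑' k, p k * f x) := by
    rw [← Summable.tsum_sub hSf (hSp.mul_right (f x))]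
    exact tsum_congr fun k => by ring
  have hstep1 : Dop μ q n f x - f x = (1/E) * ∑' k, p k * (f (node μ q n k) - f x) := by
    rw [hDf, hsub, hconst, mul_sub]
    congr 1
    field_simp
  -- step 2 : bound by the moment sum
  have hSMd : Summable (fun k => p k * (M * |node μ q n k - x| ^ ν)) :=
    (hSd.mul_left M).congr fun k => by ring
  have hnorm : ∀ k, ‖p k * (f (node μ q n k) - f x)‖
      ≤ p k * (M * |node μ q n k - x| ^ ν) := by
    intro k
    rw [Real.norm_eq_abs, abs_mul, abs_of_nonneg (hp k)]
    exact mul_le_mul_of_nonneg_left (hf _ _ (hnode0 k) hx) (hp k)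
  have hSnorm : Summable (fun k => ‖p k * (f (node μ q n k) - f x)‖) :=
    Summable.of_nonneg_of_le (fun k => norm_nonneg _) hnorm hSMd
  have habs : |∑' k, p k * (f (node μ q n k) - f x)|
      ≤ ∑' k, p k * (M * |node μ q n k - x| ^ ν) :=
    le_trans (norm_tsum_le_tsum_norm hSnorm) (Summable.tsum_le_tsum hnorm hSnorm hSMd)
  -- step 3 : Jensen
  have habs2 : ∀ d : ℝ, ((d - x) ^ 2 : ℝ) ^ ((ν:ℝ)/2) = |d - x| ^ ν := by
    intro d
    rw [← sq_abs, ← Real.rpow_natCast |d - x| 2, ← Real.rpow_mul (abs_nonneg _),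
      show ((2:ℕ):ℝ) * (ν/2) = ν by push_cast; ring]
  have hw : ∀ k, 0 ≤ p k / E := fun k => div_nonneg (hp k) hEpos.le
  have hg' : ∀ k, 0 ≤ (node μ q n k - x) ^ 2 := fun k => sq_nonneg _
  have hws : Summable (fun k => p k / E) := hSp.div_const E
  have hw1 : ∑' k, p k / E = 1 := by
    rw [tsum_div_const, ← hEdef, div_self hEpos.ne']
  have hwg : Summable (fun k => (p k / E) * (node μ q n k - x) ^ 2) :=
    (hSnx.div_const E).congr fun k => by ring
  have hwgs : Summable (fun k => (p k / E) * ((node μ q n k - x) ^ 2) ^ ((ν:ℝ)/2)) :=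
    (hSd.div_const E).congr fun k => by rw [habs2]; ring
  have hjen : ∑' k, (p k / E) * ((node μ q n k - x) ^ 2) ^ ((ν:ℝ)/2)
      ≤ (∑' k, (p k / E) * (node μ q n k - x) ^ 2) ^ ((ν:ℝ)/2) :=
    jensen_tsum_rpow (by positivity) (by linarith) hw hg' hws hw1 hwg hwgs
  have hTsum : ∑' k, (p k / E) * (node μ q n k - x) ^ 2 = T / E := by
    rw [show (fun k => (p k / E) * (node μ q n k - x) ^ 2)
        = fun k => (p k * (node μ q n k - x) ^ 2) / E from funext fun k => by ring,
      tsum_div_const, ← hTdef]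
  -- assemble
  calc |Dop μ q n f x - f x|
      = (1/E) * |∑' k, p k * (f (node μ q n k) - f x)| := by
        rw [hstep1, abs_mul, abs_of_pos (by positivity : (0:ℝ) < 1/E)]
    _ ≤ (1/E) * ∑' k, p k * (M * |node μ q n k - x| ^ ν) :=
        mul_le_mul_of_nonneg_left habs (by positivity)
    _ = M * ∑' k, (p k / E) * ((node μ q n k - x) ^ 2) ^ ((ν:ℝ)/2) := by
        rw [show (fun k => p k * (M * |node μ q n k - x| ^ ν))
            = fun k => M * (p k * |node μ q n k - x| ^ ν) from funext fun k => by ring,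
          tsum_mul_left]
        rw [show (fun k => (p k / E) * ((node μ q n k - x) ^ 2) ^ ((ν:ℝ)/2))
            = fun k => (p k * |node μ q n k - x| ^ ν) / E from
            funext fun k => by rw [habs2]; ring,
          tsum_div_const]
        ring
    _ ≤ M * (∑' k, (p k / E) * (node μ q n k - x) ^ 2) ^ ((ν:ℝ)/2) :=
        mul_le_mul_of_nonneg_left hjen hM.le
    _ = M * (Dop μ q n (fun t => (t - x) ^ 2) x) ^ (ν / 2) := by
        rw [hTsum, hDg]
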